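/- If two distinct points r₁ ≠ r₂ in ℝ³ both satisfy ‖r−sᵢ‖ = dᵢ for i = 1,2,3 with non-collinear anchors s₁,s₂,s₃, then r₂ is the reflection of r₁ across the plane spanned by s₁,s₂,s₃; in particular exactly one of them lies on each side of that plane. -/

import Mathlib

open EuclideanGeometry AffineSubspace Module

theorem trilateration_mirror_ambiguity
    (s₁ s₂ s₃ r₁ r₂ : EuclideanSpace ℝ (Fin 3)) (d₁ d₂ d₃ : ℝ)
    (hnc : LinearIndependent ℝ ![s₂ - s₁, s₃ - s₁])
    (hne : r₁ ≠ r₂)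
    (h₁ : dist r₁ s₁ = d₁) (h₂ : dist r₁ s₂ = d₂) (h₃ : dist r₁ s₃ = d₃)
    (h₁' : dist r₂ s₁ = d₁) (h₂' : dist r₂ s₂ = d₂) (h₃' : dist r₂ s₃ = d₃) :
    haveI : Nonempty ↥(affineSpan ℝ ({s₁, s₂, s₃} : Set (EuclideanSpace ℝ (Fin 3)))) :=
      ⟨⟨s₁, subset_affineSpan ℝ _ (by simp)⟩⟩
    r₂ = EuclideanGeometry.reflection
        (affineSpan ℝ ({s₁, s₂, s₃} : Set (EuclideanSpace ℝ (Fin 3)))) r₁ ∧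
    (affineSpan ℝ ({s₁, s₂, s₃} : Set (EuclideanSpace ℝ (Fin 3)))).SOppSide r₁ r₂ := by
  set S : Set (EuclideanSpace ℝ (Fin 3)) := {s₁, s₂, s₃} with hS
  haveI : Nonempty ↥(affineSpan ℝ S) := ⟨⟨s₁, subset_affineSpan ℝ _ (by simp [hS])⟩⟩
  set H : AffineSubspace ℝ (EuclideanSpace ℝ (Fin 3)) := AffineSubspace.perpBisector r₁ r₂
    with hH
  -- each sᵢ lies on the perpendicular bisector of r₁ r₂
  have hm : ∀ p, dist r₁ p = dist r₂ p → p ∈ H := fun p hp =>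
    (AffineSubspace.mem_perpBisector_iff_dist_eq').2 hp
  have hs₁H : s₁ ∈ H := hm s₁ (h₁.trans h₁'.symm)
  have hs₂H : s₂ ∈ H := hm s₂ (h₂.trans h₂'.symm)
  have hs₃H : s₃ ∈ H := hm s₃ (h₃.trans h₃'.symm)
  have hle : affineSpan ℝ S ≤ H := by
    rw [affineSpan_le]
    rintro p (rfl | rfl | rfl) <;> assumption
  have hv : r₂ -ᵥ r₁ ≠ 0 := by
    rw [vsub_ne_zero]; exact fun h => hne h.symm
  -- the perpendicular bisector is a plane (finrank 2 direction)
  have hfrH : finrank ℝ H.direction = 2 := by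
    rw [hH, AffineSubspace.direction_perpBisector]
    have h1 : finrank ℝ (ℝ ∙ (r₂ -ᵥ r₁)) = 1 := finrank_span_singleton hv
    have h2 := Submodule.finrank_add_finrank_orthogonal (𝕜 := ℝ)
      (E := EuclideanSpace ℝ (Fin 3)) (ℝ ∙ (r₂ -ᵥ r₁))
    rw [h1, finrank_euclideanSpace_fin] at h2
    omega
  -- the direction of the anchors' span has finrank at least 2
  have hsub : Submodule.span ℝ (Set.range ![s₂ - s₁, s₃ - s₁]) ≤ (affineSpan ℝ S).direction := by
    rw [Submodule.span_le, direction_affineSpan]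
    rintro v ⟨i, rfl⟩
    fin_cases i
    · simpa using vsub_mem_vectorSpan ℝ (show s₂ ∈ S by simp [hS]) (show s₁ ∈ S by simp [hS])
    · simpa using vsub_mem_vectorSpan ℝ (show s₃ ∈ S by simp [hS]) (show s₁ ∈ S by simp [hS])
  have hfrS : 2 ≤ finrank ℝ (affineSpan ℝ S).direction := by
    have h3 := Submodule.finrank_mono hsub
    rwa [finrank_span_eq_card hnc, Fintype.card_fin] at h3
  -- the span equals the perpendicular bisector
  have hdir : (affineSpan ℝ S).direction = H.direction :=
    Submodule.eq_of_le_of_finrank_le (AffineSubspace.direction_le hle) (by omega)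
  have hspan : affineSpan ℝ S = H :=
    AffineSubspace.ext_of_direction_eq hdir
      ⟨s₁, subset_affineSpan ℝ _ (by simp [hS]), hs₁H⟩
  -- the midpoint of r₁ r₂ is the orthogonal projection of r₁ onto H
  have hmidH : midpoint ℝ r₁ r₂ ∈ H := AffineSubspace.midpoint_mem_perpBisector r₁ r₂
  haveI : Nonempty ↥H := ⟨⟨s₁, hs₁H⟩⟩
  have hr₁ : r₁ = (r₁ -ᵥ midpoint ℝ r₁ r₂) +ᵥ midpoint ℝ r₁ r₂ := (vsub_vadd _ _).symm
  have hvmem : r₁ -ᵥ midpoint ℝ r₁ r₂ ∈ H.directionᗮ := by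
    rw [hH, AffineSubspace.direction_perpBisector, Submodule.orthogonal_orthogonal,
      left_vsub_midpoint]
    refine Submodule.mem_span_singleton.2 ⟨-(⅟2 : ℝ), ?_⟩
    rw [neg_smul, ← smul_neg, neg_vsub_eq_vsub_rev]
  have hproj : (EuclideanGeometry.orthogonalProjection H r₁ : EuclideanSpace ℝ (Fin 3))
      = midpoint ℝ r₁ r₂ := by
    conv_lhs => rw [hr₁]
    rw [EuclideanGeometry.orthogonalProjection_vadd_eq_self hmidH hvmem]
  have hrefl : EuclideanGeometry.reflection H r₁ = r₂ := by
    rw [EuclideanGeometry.reflection_apply', hproj, eq_comm, eq_vadd_iff_vsub_eq,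
      right_vsub_midpoint, midpoint_vsub_left]
  have hr₁H : r₁ ∉ H := by
    rw [hH, AffineSubspace.left_mem_perpBisector]
    exact hne
  constructor
  · rw [← hrefl]
    exact (EuclideanGeometry.eq_reflection_of_eq_subspace hspan r₁).symm
  · rw [hspan]
    have hso := AffineSubspace.sOppSide_pointReflection hmidH hr₁H
    have hpr : (AffineEquiv.pointReflection ℝ (midpoint ℝ r₁ r₂)) r₁ = r₂ := by
      rw [AffineEquiv.pointReflection_apply, eq_comm, eq_vadd_iff_vsub_eq,
        right_vsub_midpoint, midpoint_vsub_left]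
    rwa [hpr] at hso
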